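/- In Q[[λ]] one has (qλ−1)·L[F·log_q(1−λ)] = −(2q[1/2]_q λ − 1)·F − 2qλ(q^{1/2}λ − 1)·d_qF, where F := Σ_{n≥0} a_n λ^n; equivalently, since qλ−1 is a unit of Q[[λ]], L[F·log_q(1−λ)] = −((2q[1/2]_q λ − 1)/(qλ−1))·F − 2qλ·((q^{1/2}λ−1)/(qλ−1))·d_qF. -/

import Mathlib

/- Setting (following Dwork-type q-congruences / q-hypergeometric papers):
`p` is an odd prime, `R = ℤ_p[[q−1]]` is implemented as `PowerSeries ℤ_[p]`, the power-series
variable `PowerSeries.X` standing for `q − 1`. -/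

noncomputable section
open PowerSeries
namespace QDwork

variable (p : ℕ) [Fact p.Prime]

/-- `R = ℤ_p[[q−1]]`. -/
abbrev R : Type := PowerSeries ℤ_[p]

/-- `q = 1 + (q−1) ∈ R`. -/
def qq : R p := 1 + PowerSeries.X

/-- `q^a = Σ_{i≥0} binom(a,i)(q−1)^i ∈ R` for `a ∈ ℤ_p`, using the p-adically interpolated
binomial coefficients `Ring.choose` (`ℤ_p` is a binomial ring). -/
def qpow (a : ℤ_[p]) : R p := PowerSeries.mk fun i => Ring.choose a i

/-- The q-number `[a]_q = (q^a−1)/(q−1) = Σ_{i≥1} binom(a,i)(q−1)^{i−1} ∈ R` for `a ∈ ℤ_p`. -/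
def qnum (a : ℤ_[p]) : R p := PowerSeries.mk fun i => Ring.choose a (i + 1)

/-- The q-number `[n]_q = 1 + q + ⋯ + q^{n−1} ∈ R` of a natural number `n`. -/
def qnat (n : ℕ) : R p := ∑ i ∈ Finset.range n, qq p ^ i

/-- `1/2 ∈ ℤ_p` (recall `p` is odd, so `2` is a unit of `ℤ_p`). -/
def half : ℤ_[p] := Ring.inverse 2

/-- The q-derivative `d_q = (γ−1)/((q−1)λ)` on `A[[λ]]`, for a commutative ring `A` with a
distinguished element `q`; it is given on coefficients by `d_q(Σ aₙλⁿ) = Σ [n]_q aₙ λ^{n−1}`,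
and is characterized by `dq_spec` below. -/
def dq {A : Type} [CommRing A] (q : A) (f : PowerSeries A) : PowerSeries A :=
  PowerSeries.mk fun n => (∑ i ∈ Finset.range (n + 1), q ^ i) * PowerSeries.coeff (n + 1) f

/-- `d_q` is indeed `(γ−1)/((q−1)λ)`, where `γ(f)(λ) = f(qλ)` is `PowerSeries.rescale q`:
we have `(q−1)·λ·(d_q f) = γ(f) − f`. -/
theorem dq_spec {A : Type} [CommRing A] (q : A) (f : PowerSeries A) :
    PowerSeries.C (q - 1) * PowerSeries.X * dq q f = PowerSeries.rescale q f - f := by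
  ext n
  rw [mul_comm (PowerSeries.C (q - 1)) PowerSeries.X, mul_assoc]
  rcases n with _ | n
  · have h0 := PowerSeries.coeff_rescale f q 0
    simp only [pow_zero, one_mul, PowerSeries.coeff_zero_eq_constantCoeff] at h0
    simp only [PowerSeries.coeff_zero_eq_constantCoeff, map_mul, map_sub, constantCoeff_X,
      zero_mul, h0, sub_self]
  · rw [PowerSeries.coeff_succ_X_mul, PowerSeries.coeff_C_mul, dq, PowerSeries.coeff_mk,
      map_sub, PowerSeries.coeff_rescale]
    rw [← mul_assoc, mul_comm (q - 1), geom_sum_mul, sub_one_mul]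

/-- `Q = Frac(R)`. -/
abbrev Q : Type := FractionRing (R p)

/-- The canonical injection `R → Q`. -/
def ι : R p →+* Q p := algebraMap (R p) (Q p)

/-- `q ∈ Q`. -/
def qQ : Q p := ι p (qq p)

/-- `[a]_q` viewed in `Q`, for `a ∈ ℤ_p`. -/
def qnumQ (a : ℤ_[p]) : Q p := ι p (qnum p a)

/-- `[n]_q` viewed in `Q`, for a natural number `n`. -/
def qnatQ (n : ℕ) : Q p := ι p (qnat p n)

/-- `a_n = ∏_{i=0}^{n−1} ([i+1/2]_q/[i+1]_q)² ∈ Q`, with `a_0 = 1`. -/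
def aCoef (n : ℕ) : Q p :=
  ∏ i ∈ Finset.range n, (qnumQ p ((i : ℤ_[p]) + half p) / qnumQ p ((i : ℤ_[p]) + 1)) ^ 2

/-- `F = Σ_{n≥0} a_n λ^n ∈ Q[[λ]]`. -/
def Fq : PowerSeries (Q p) := PowerSeries.mk fun n => aCoef p n

/-- `α = 1 + [2]_q − 2[1/2]_q ∈ Q`. -/
def alphaQ : Q p := 1 + qnumQ p 2 - 2 * qnumQ p (half p)

/-- The q-hypergeometric operator
`L[f] = qλ(1−qλ)·d_q²f + (1−αλ)·d_qf − [1/2]_q²·f` on `Q[[λ]]`. -/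
def Lq (f : PowerSeries (Q p)) : PowerSeries (Q p) :=
  PowerSeries.C (qQ p) * PowerSeries.X *
      (1 - PowerSeries.C (qQ p) * PowerSeries.X) * dq (qQ p) (dq (qQ p) f) +
    (1 - PowerSeries.C (alphaQ p) * PowerSeries.X) * dq (qQ p) f -
    PowerSeries.C (qnumQ p (half p) ^ 2) * f

/-- `log_q(1−λ) = −Σ_{n≥1} λ^n/[n]_q ∈ Q[[λ]]`. -/
def logq1subl : PowerSeries (Q p) :=
  PowerSeries.mk fun n => if n = 0 then 0 else -(qnatQ p n)⁻¹

/-!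
Write `ℓ = log_q(1−λ)`. The q-Leibniz rule `d_q(fg) = d_q f · g + γf · d_q g` gives
`L[fℓ] = ℓ·L[f] + (terms in d_qℓ and d_q²ℓ)`, where `d_qℓ = −1/(1−λ)` and
`d_q²ℓ = −1/((1−λ)(1−qλ))`. The series `F` solves `L[F] = 0`: on coefficients this is the
recursion `a_{n+1}[n+1]_q² = a_n[n+1/2]_q²`. For any solution `f`, multiplying by `1−λ` and
expanding `γ = 1 + (q−1)λ·d_q` leaves an identity between `f`, `d_q f`, `d_q²f` which is a
multiple of `L[f]`, once `(q−1)[1/2]_q = q^{1/2} − 1` and `[1/2]_q(1 + q^{1/2}) = [1]_q = 1`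
are used.
-/

section qDerivative

variable {A : Type} [CommRing A] (q : A)

@[simp]
theorem coeff_dq (f : PowerSeries A) (n : ℕ) :
    coeff n (dq q f) = (∑ i ∈ Finset.range (n + 1), q ^ i) * coeff (n + 1) f :=
  coeff_mk _ _

theorem coeff_X_mul_dq (f : PowerSeries A) (n : ℕ) :
    coeff n (X * dq q f) = (∑ i ∈ Finset.range n, q ^ i) * coeff n f := by
  cases n <;> simp [coeff_succ_X_mul]

theorem dq_add (f g : PowerSeries A) : dq q (f + g) = dq q f + dq q g := by
  ext n
  simp [mul_add]

theorem dq_neg (f : PowerSeries A) : dq q (-f) = -dq q f := by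
  ext n
  simp

theorem rescale_eq_add_dq (f : PowerSeries A) :
    rescale q f = f + C (q - 1) * X * dq q f :=
  (sub_eq_iff_eq_add'.mp (dq_spec q f).symm)

theorem dq_mul (f g : PowerSeries A) :
    dq q (f * g) = dq q f * g + rescale q f * dq q g := by
  ext n
  have split : ∀ x ∈ Finset.HasAntidiagonal.antidiagonal (n + 1),
      (∑ i ∈ Finset.range (n + 1), q ^ i) * (coeff x.1 f * coeff x.2 g) =
        (∑ i ∈ Finset.range x.1, q ^ i) * coeff x.1 f * coeff x.2 g +
          q ^ x.1 * coeff x.1 f * ((∑ i ∈ Finset.range x.2, q ^ i) * coeff x.2 g) := by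
    intro x hx
    rw [← Finset.HasAntidiagonal.mem_antidiagonal.mp hx, Finset.sum_range_add]
    simp only [pow_add, ← Finset.mul_sum]
    ring
  rw [coeff_dq, coeff_mul, Finset.mul_sum, Finset.sum_congr rfl split, Finset.sum_add_distrib,
    Finset.Nat.sum_antidiagonal_succ, Finset.Nat.sum_antidiagonal_succ', map_add, coeff_mul,
    coeff_mul]
  simp [coeff_rescale, mul_assoc]

theorem dq_rescale (f : PowerSeries A) : dq q (rescale q f) = C q * rescale q (dq q f) := by
  ext n
  simp only [coeff_dq, coeff_rescale, coeff_C_mul, pow_succ]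
  ring

theorem dq_X : dq q (X : PowerSeries A) = 1 := by
  ext n
  cases n <;> simp [coeff_X, coeff_one]

theorem dq_X_mul (f : PowerSeries A) : dq q (X * f) = f + C q * X * dq q f := by
  rw [dq_mul, dq_X, rescale_X, one_mul]

theorem one_sub_C_mul_X_mul_dq_mk_one :
    (1 - C q * X) * dq q (mk 1) = mk 1 := by
  ext n
  rw [sub_mul, one_mul, mul_assoc, map_sub, coeff_C_mul]
  cases n with
  | zero => simp
  | succ n => simp [coeff_succ_X_mul, geom_sum_succ (n := n + 1)]

end qDerivative

theorem qpow_eq_binomialSeries (a : ℤ_[p]) : qpow p a = binomialSeries ℤ_[p] a := by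
  ext n
  simp [qpow]

theorem qpow_add (a b : ℤ_[p]) : qpow p (a + b) = qpow p a * qpow p b := by
  simp only [qpow_eq_binomialSeries, binomialSeries_add]

theorem qpow_natCast (n : ℕ) : qpow p n = qq p ^ n := by
  rw [qpow_eq_binomialSeries, binomialSeries_nat, qq]

theorem X_mul_qnum (a : ℤ_[p]) : X * qnum p a = qpow p a - 1 := by
  ext n
  cases n <;> simp [qnum, qpow, coeff_succ_X_mul, coeff_one]

theorem qnum_add (a b : ℤ_[p]) : qnum p (a + b) = qnum p a + qpow p a * qnum p b := by
  apply mul_left_cancel₀ (X_ne_zero (R := ℤ_[p]))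
  linear_combination X_mul_qnum p (a + b) + qpow_add p a b - X_mul_qnum p a -
    qpow p a * X_mul_qnum p b

theorem qnum_natCast (n : ℕ) : qnum p n = qnat p n := by
  apply mul_left_cancel₀ (X_ne_zero (R := ℤ_[p]))
  have hX : X = qq p - 1 := by rw [qq]; ring
  rw [X_mul_qnum, qpow_natCast, qnat, hX, mul_comm, geom_sum_mul]

theorem constantCoeff_qnum (a : ℤ_[p]) : constantCoeff (qnum p a) = a := by
  simp [qnum, ← coeff_zero_eq_constantCoeff_apply]

theorem half_add_half (hp : p ≠ 2) : half p + half p = 1 := by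
  have h2 : IsUnit (2 : ℤ_[p]) := by
    rw [PadicInt.isUnit_iff, ← Nat.cast_ofNat, PadicInt.norm_natCast_eq_one_iff]
    exact (Nat.coprime_primes Fact.out Nat.prime_two).mpr hp
  rw [← two_mul]
  exact Ring.mul_inverse_cancel 2 h2

theorem qnum_half_mul_one_add_qpow_half (hp : p ≠ 2) :
    qnum p (half p) * (1 + qpow p (half p)) = 1 := by
  have h := qnum_add p (half p) (half p)
  rw [half_add_half p hp, ← Nat.cast_one, qnum_natCast, qnat, Finset.sum_range_one, pow_zero] at h
  linear_combination -h

theorem qnum_add_half_sq (hp : p ≠ 2) (a : ℤ_[p]) :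
    qnum p (a + half p) ^ 2 =
      qq p * qnum p a ^ 2 + 2 * (1 - qnum p (half p)) * qnum p a + qnum p (half p) ^ 2 := by
  set N := qnum p a
  set w := qnum p (half p)
  have hN := X_mul_qnum p a
  have hw := X_mul_qnum p (half p)
  rw [qnum_add, qq]
  -- With `q^a = 1 + X·N`, the difference of the two sides is `(X N² + 2N)(X w² + 2w − 1)`,
  -- and `X w² + 2w − 1 = w(1 + q^{1/2}) − 1 = 0`.
  linear_combination (-(w * (2 * N + (qpow p a + 1 + X * N) * w))) * hN +
    (X * N ^ 2 + 2 * N) * w * hw + (X * N ^ 2 + 2 * N) * qnum_half_mul_one_add_qpow_half p hp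

theorem qnumQ_natCast (n : ℕ) : qnumQ p n = ∑ i ∈ Finset.range n, qQ p ^ i := by
  simp [qnumQ, qnum_natCast, qnat, qQ]

theorem qnumQ_ne_zero {a : ℤ_[p]} (ha : a ≠ 0) : qnumQ p a ≠ 0 := by
  refine (map_ne_zero_iff _ (IsFractionRing.injective (R p) (Q p))).mpr fun h => ha ?_
  rw [← constantCoeff_qnum p a, h, map_zero]

theorem alphaQ_eq : alphaQ p = 2 + qQ p - 2 * qnumQ p (half p) := by
  have h2 : qnum p 2 = 1 + qq p := by
    rw [← Nat.cast_ofNat, qnum_natCast, qnat, geom_sum_two, add_comm]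
  simp only [alphaQ, qnumQ, h2, map_add, map_one, qQ]
  ring

theorem qQ_sub_one_mul_qnumQ (a : ℤ_[p]) : (qQ p - 1) * qnumQ p a = ι p (qpow p a) - 1 := by
  have hX : ι p X = qQ p - 1 := by simp [qQ, qq]
  rw [← hX, qnumQ, ← map_mul, X_mul_qnum, map_sub, map_one]

theorem qnumQ_half_mul_one_add_qpow_half (hp : p ≠ 2) :
    qnumQ p (half p) * (1 + ι p (qpow p (half p))) = 1 := by
  rw [qnumQ, ← map_one (ι p), ← map_add, ← map_mul, qnum_half_mul_one_add_qpow_half p hp]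

theorem qnumQ_add_half_sq (hp : p ≠ 2) (a : ℤ_[p]) :
    qnumQ p (a + half p) ^ 2 =
      qQ p * qnumQ p a ^ 2 + (alphaQ p - qQ p) * qnumQ p a + qnumQ p (half p) ^ 2 := by
  have h := congrArg (ι p) (qnum_add_half_sq p hp a)
  simp only [map_add, map_mul, map_pow, map_sub, map_one, map_ofNat] at h
  rw [alphaQ_eq]
  unfold qnumQ qQ
  linear_combination h

theorem aCoef_succ (n : ℕ) :
    aCoef p (n + 1) * qnumQ p ((n : ℤ_[p]) + 1) ^ 2 =
      aCoef p n * qnumQ p ((n : ℤ_[p]) + half p) ^ 2 := by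
  have h : qnumQ p ((n : ℤ_[p]) + 1) ≠ 0 := qnumQ_ne_zero p (by exact_mod_cast n.succ_ne_zero)
  rw [aCoef, Finset.prod_range_succ, ← aCoef]
  field_simp

theorem coeff_Lq (f : PowerSeries (Q p)) (n : ℕ) :
    coeff n (Lq p f) =
      qnumQ p ((n : ℤ_[p]) + 1) ^ 2 * coeff (n + 1) f -
        (qQ p * qnumQ p n ^ 2 + (alphaQ p - qQ p) * qnumQ p n + qnumQ p (half p) ^ 2) *
          coeff n f := by
  have euler : Lq p f = dq (qQ p) (X * dq (qQ p) f) -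
      C (qQ p) * (X * dq (qQ p) (X * dq (qQ p) f)) - C (alphaQ p - qQ p) * (X * dq (qQ p) f) -
      C (qnumQ p (half p) ^ 2) * f := by
    rw [Lq, dq_X_mul, map_sub]
    ring
  have hsucc : qnumQ p ((n : ℤ_[p]) + 1) = ∑ i ∈ Finset.range (n + 1), qQ p ^ i := by
    rw [← qnumQ_natCast, Nat.cast_succ]
  simp only [euler, map_sub (coeff n), coeff_dq, coeff_C_mul, coeff_X_mul_dq, ← qnumQ_natCast,
    hsucc]
  ring

theorem Lq_Fq (hp : p ≠ 2) : Lq p (Fq p) = 0 := by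
  ext n
  rw [coeff_Lq, Fq, coeff_mk, coeff_mk, map_zero]
  linear_combination aCoef_succ p n + aCoef p n * qnumQ_add_half_sq p hp n

theorem dq_logq : dq (qQ p) (logq1subl p) = -mk 1 := by
  ext n
  have hne : qnatQ p (n + 1) ≠ 0 := by
    rw [qnatQ, ← qnum_natCast]
    exact qnumQ_ne_zero p (by exact_mod_cast n.succ_ne_zero)
  have h : ∑ i ∈ Finset.range (n + 1), qQ p ^ i = qnatQ p (n + 1) := by
    simp [qnatQ, qnat, qQ]
  simp [logq1subl, h, hne]

theorem Lq_mul (f g : PowerSeries (Q p)) :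
    Lq p (f * g) = Lq p f * g +
      C (qQ p) * X * (1 - C (qQ p) * X) *
        ((1 + C (qQ p)) * rescale (qQ p) (dq (qQ p) f) * dq (qQ p) g +
          rescale (qQ p) (rescale (qQ p) f) * dq (qQ p) (dq (qQ p) g)) +
      (1 - C (alphaQ p) * X) * rescale (qQ p) f * dq (qQ p) g := by
  simp only [Lq, dq_mul, dq_add, dq_rescale]
  ring

theorem one_sub_X_mul_Lq_mul_logq_of_Lq_eq_zero (f : PowerSeries (Q p)) (hf : Lq p f = 0) :
    (1 - X) * Lq p (f * logq1subl p) =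
      -(C (qQ p) * X * (1 - C (qQ p) * X) * (1 + C (qQ p)) * rescale (qQ p) (dq (qQ p) f) +
        C (qQ p) * X * rescale (qQ p) (rescale (qQ p) f) +
        (1 - C (alphaQ p) * X) * rescale (qQ p) f) := by
  rw [Lq_mul, hf, dq_logq, dq_neg]
  have hG := mk_one_mul_one_sub_eq_one (S := Q p)
  have hdG := one_sub_C_mul_X_mul_dq_mk_one (qQ p)
  set q := C (qQ p)
  set α := C (alphaQ p)
  set γf := rescale (qQ p) f
  linear_combination
    (-(q * X * (1 - q * X) * (1 + q) * rescale (qQ p) (dq (qQ p) f) +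
        q * X * rescale (qQ p) γf + (1 - α * X) * γf)) * hG -
      q * X * rescale (qQ p) γf * (1 - X) * hdG

theorem rescale_identity_of_Lq_eq_zero (hp : p ≠ 2) (f : PowerSeries (Q p)) (hf : Lq p f = 0) :
    (C (qQ p) * X - 1) *
        (C (qQ p) * X * (1 - C (qQ p) * X) * (1 + C (qQ p)) * rescale (qQ p) (dq (qQ p) f) +
          C (qQ p) * X * rescale (qQ p) (rescale (qQ p) f) +
          (1 - C (alphaQ p) * X) * rescale (qQ p) f) =
      (1 - X) * ((C (2 * qQ p * qnumQ p (half p)) * X - 1) * f +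
        C (2 * qQ p) * X * ((C (ι p (qpow p (half p))) * X - 1) * dq (qQ p) f)) := by
  have hα := congrArg C (alphaQ_eq p)
  have hw := congrArg C (qQ_sub_one_mul_qnumQ p (half p))
  have hr := congrArg C (qnumQ_half_mul_one_add_qpow_half p hp)
  rw [Lq] at hf
  rw [rescale_eq_add_dq _ (rescale _ _), dq_rescale]
  simp only [rescale_eq_add_dq]
  simp only [map_mul, map_sub, map_add, map_one, map_ofNat, map_pow] at hf hα hw hr ⊢
  set q := C (qQ p)
  set α := C (alphaQ p)
  set w := C (qnumQ p (half p))
  set s := C (ι p (qpow p (half p)))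
  set D := dq (qQ p) f
  -- The multiple of `L[f]` is read off from the coefficient of `d_q²f`.
  linear_combination (-(q - 1) * X * (1 + q - 2 * q * X)) * hf +
    (f * (X - q * X ^ 2) - D * q * X ^ 2 * (1 - X) * (q - 1)) * hα +
    f * (-(1 + q) * X + 2 * q * X ^ 2) * hr +
    (f * (-(1 + q) * w * X + 2 * q * w * X ^ 2) + 2 * q * X ^ 2 * (1 - X) * D) * hw

theorem Lq_mul_logq_of_Lq_eq_zero (hp : p ≠ 2) (f : PowerSeries (Q p)) (hf : Lq p f = 0) :
    (C (qQ p) * X - 1) * Lq p (f * logq1subl p) =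
      -((C (2 * qQ p * qnumQ p (half p)) * X - 1) * f) -
        C (2 * qQ p) * X * ((C (ι p (qpow p (half p))) * X - 1) * dq (qQ p) f) := by
  apply mul_left_cancel₀ (right_ne_zero_of_mul_eq_one (mk_one_mul_one_sub_eq_one (S := Q p)))
  linear_combination (C (qQ p) * X - 1) * one_sub_X_mul_Lq_mul_logq_of_Lq_eq_zero p f hf -
    rescale_identity_of_Lq_eq_zero p hp f hf

/-- In `Q[[λ]]`: `(qλ−1)·L[F·log_q(1−λ)] = −(2q[1/2]_q λ − 1)·F − 2qλ(q^{1/2}λ − 1)·d_qF`. -/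
theorem L_F_logq (hp : p ≠ 2) :
    (PowerSeries.C (qQ p) * PowerSeries.X - 1) * Lq p (Fq p * logq1subl p) =
      -((PowerSeries.C (2 * qQ p * qnumQ p (half p)) * PowerSeries.X - 1) * Fq p) -
        PowerSeries.C (2 * qQ p) * PowerSeries.X *
          ((PowerSeries.C (ι p (qpow p (half p))) * PowerSeries.X - 1) *
            dq (qQ p) (Fq p)) :=
  Lq_mul_logq_of_Lq_eq_zero p hp (Fq p) (Lq_Fq p hp)

end QDwork
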